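/- Suppose |X| ≥ |Y|, for every k ∈ {1,…,|Y|} the total level of the k best items of X is at least that of the k best items of Y, and moreover the total level of X strictly exceeds the total level of Y. Then for every additive DD utility function u consistent with the ranking, u(X) > u(Y). -/

import Mathlib

variable {α : Type*} [Fintype α] [LinearOrder α]

/-- Borda level: the best item has level `Fintype.card α`, the worst has level 1. -/
def lev (x : α) : ℕ := (Finset.univ.filter (· ≤ x)).card

/-- Total Borda level of a multiset. -/
def levSum (X : Multiset α) : ℕ := (X.map lev).sum

/-- Sum of levels of the `k` best (highest-ranked) items of `X`. -/
def topLevSum (X : Multiset α) (k : ℕ) : ℕ := (((X.map lev).sort (· ≥ ·)).take k).sum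

/-- Sum of levels of the `k` worst (lowest-ranked) items of `X`. -/
def botLevSum (X : Multiset α) (k : ℕ) : ℕ := (((X.map lev).sort (· ≤ ·)).take k).sum

/-- Additive extension of `u` to multisets. -/
def msum (u : α → ℝ) (X : Multiset α) : ℝ := (X.map u).sum

/-- `u` is consistent with the ranking: `u x > u y` iff `x ≻ y`. -/
def Consistent (u : α → ℝ) : Prop := ∀ x y : α, u x > u y ↔ y < x

/-- Diminishing differences: for items with consecutive levels `x3 ≻ x2 ≻ x1`,
`u x3 - u x2 ≥ u x2 - u x1`. -/
def DD (u : α → ℝ) : Prop :=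
  ∀ x1 x2 x3 : α, lev x3 = lev x2 + 1 → lev x2 = lev x1 + 1 → u x2 - u x1 ≤ u x3 - u x2

/-- Increasing differences: for items with consecutive levels `x3 ≻ x2 ≻ x1`,
`u x3 - u x2 ≤ u x2 - u x1`. -/
def ID (u : α → ℝ) : Prop :=
  ∀ x1 x2 x3 : α, lev x3 = lev x2 + 1 → lev x2 = lev x1 + 1 → u x3 - u x2 ≤ u x2 - u x1

lemma lev_strictMono : StrictMono (lev (α := α)) := by
  intro x y hxy
  apply Finset.card_lt_card
  constructor
  · intro z hz
    simp only [Finset.mem_filter] at *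
    exact ⟨hz.1, le_trans hz.2 hxy.le⟩
  · intro hsub
    have : y ∈ Finset.univ.filter (· ≤ x) := hsub (by simp)
    simp only [Finset.mem_filter] at this
    exact absurd this.2 (not_le.mpr hxy)

lemma lev_lt_lev_iff {x y : α} : lev x < lev y ↔ x < y := lev_strictMono.lt_iff_lt

lemma one_le_lev (x : α) : 1 ≤ lev x := by
  rw [Nat.one_le_iff_ne_zero, ← Nat.pos_iff_ne_zero, lev, Finset.card_pos]
  exact ⟨x, by simp⟩

lemma lev_le_card (x : α) : lev x ≤ Fintype.card α :=
  (Finset.card_filter_le _ _).trans (le_of_eq (Finset.card_univ))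

lemma lev_injective : Function.Injective (lev (α := α)) := lev_strictMono.injective

lemma exists_lev_eq {t : ℕ} (h1 : 1 ≤ t) (h2 : t ≤ Fintype.card α) : ∃ x : α, lev x = t := by
  have himg : Finset.image lev (Finset.univ : Finset α) = Finset.Icc 1 (Fintype.card α) := by
    apply Finset.eq_of_subset_of_card_le
    · intro t ht
      simp only [Finset.mem_image] at ht
      obtain ⟨x, _, rfl⟩ := ht
      exact Finset.mem_Icc.mpr ⟨one_le_lev x, lev_le_card x⟩
    · rw [Nat.card_Icc, Finset.card_image_of_injective _ lev_injective, Finset.card_univ]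
      omega
  have : t ∈ Finset.image lev (Finset.univ : Finset α) := by
    rw [himg]; exact Finset.mem_Icc.mpr ⟨h1, h2⟩
  simpa using this

noncomputable def vv (u : α → ℝ) (t : ℕ) : ℝ :=
  ∑ x ∈ Finset.univ.filter (fun x => lev x = t), u x

lemma vv_lev (u : α → ℝ) (x : α) : vv u (lev x) = u x := by
  rw [vv]
  have : Finset.univ.filter (fun y => lev y = lev x) = {x} := by
    ext y
    simp only [Finset.mem_filter, Finset.mem_singleton, Finset.mem_univ, true_and]
    exact ⟨fun h => lev_injective h, fun h => by rw [h]⟩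
  rw [this, Finset.sum_singleton]

lemma vv_zero (u : α → ℝ) : vv u 0 = 0 := by
  rw [vv]
  apply Finset.sum_eq_zero
  intro x hx
  simp only [Finset.mem_filter] at hx
  exact absurd hx.2 (by have := one_le_lev x; omega)

noncomputable def gg (u : α → ℝ) (t : ℕ) : ℝ :=
  if t + 1 ≤ Fintype.card α then vv u (t + 1) - vv u t
  else vv u (Fintype.card α) - vv u (Fintype.card α - 1)

section GG
variable {u : α → ℝ} (hpos : ∀ x, 0 < u x) (hc : Consistent u) (hdd : DD u)

include hc in
lemma vv_step_pos {t : ℕ} (h1 : 1 ≤ t) (h2 : t + 1 ≤ Fintype.card α) :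
    0 < vv u (t + 1) - vv u t := by
  obtain ⟨x, hx⟩ := exists_lev_eq (α := α) h1 (by omega)
  obtain ⟨y, hy⟩ := exists_lev_eq (α := α) (t := t + 1) (by omega) h2
  have hxy : x < y := lev_lt_lev_iff.mp (by omega)
  have hgt := (hc y x).mpr hxy
  rw [← vv_lev u x, ← vv_lev u y, hx, hy] at hgt
  linarith

include hpos hc in
lemma gg_pos {t : ℕ} (h1 : 1 ≤ t) (h2 : t ≤ Fintype.card α) : 0 < gg u t := by
  rw [gg]
  split_ifs with h
  · exact vv_step_pos hc h1 h
  · have hM : t = Fintype.card α := by omega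
    rcases Nat.lt_or_ge 1 (Fintype.card α) with hM2 | hM2
    · have := vv_step_pos (u := u) hc (t := Fintype.card α - 1) (by omega) (by omega)
      have he : Fintype.card α - 1 + 1 = Fintype.card α := by omega
      rw [he] at this
      linarith
    · have hM1 : Fintype.card α = 1 := by omega
      rw [hM1]
      norm_num [vv_zero]
      obtain ⟨x, hx⟩ := exists_lev_eq (α := α) (t := 1) le_rfl (by omega)
      rw [← hx, vv_lev]
      have := hpos x
      linarith

include hdd in
omit hc in
lemma gg_step_mono {t : ℕ} (h1 : 1 ≤ t) (h2 : t + 1 ≤ Fintype.card α) :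
    gg u t ≤ gg u (t + 1) := by
  rcases Nat.lt_or_ge (t + 1) (Fintype.card α) with h | h
  · obtain ⟨x1, hx1⟩ := exists_lev_eq (α := α) h1 (by omega)
    obtain ⟨x2, hx2⟩ := exists_lev_eq (α := α) (t := t + 1) (by omega) (by omega)
    obtain ⟨x3, hx3⟩ := exists_lev_eq (α := α) (t := t + 2) (by omega) (by omega)
    have hdd' := hdd x1 x2 x3 (by omega) (by omega)
    rw [← vv_lev u x1, ← vv_lev u x2, ← vv_lev u x3, hx1, hx2, hx3] at hdd'
    rw [gg, gg, if_pos h2, if_pos (by omega)]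
    have e : t + 1 + 1 = t + 2 := rfl
    rw [e]
    linarith
  · have hM : t + 1 = Fintype.card α := by omega
    rw [gg, gg, if_pos h2, if_neg (by omega), ← hM]
    have e : t + 1 - 1 = t := by omega
    rw [e]

end GG

section Chain
variable {u : α → ℝ} (hpos : ∀ x, 0 < u x) (hc : Consistent u) (hdd : DD u)

include hdd in
lemma gg_mono {s t : ℕ} (h1 : 1 ≤ s) (hst : s ≤ t) (h2 : t ≤ Fintype.card α) :
    gg u s ≤ gg u t := by
  induction t, hst using Nat.le_induction with
  | base => exact le_rfl
  | succ t hst ih =>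
    exact le_trans (ih (by omega)) (gg_step_mono hdd (by omega) h2)

omit hc in
lemma gg_eq_step {t : ℕ} (h2 : t + 1 ≤ Fintype.card α) :
    gg u t = vv u (t + 1) - vv u t := by
  rw [gg, if_pos h2]

include hdd in
omit hc in
lemma vv_chain_lower {a b : ℕ} (h1 : 1 ≤ b) (hba : b ≤ a) (h2 : a ≤ Fintype.card α) :
    gg u b * ((a : ℝ) - b) ≤ vv u a - vv u b := by
  induction a, hba using Nat.le_induction with
  | base => simp
  | succ a hba ih =>
    have hstep : gg u a = vv u (a + 1) - vv u a := gg_eq_step h2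
    have hmono : gg u b ≤ gg u a := gg_mono hdd h1 hba (by omega)
    have ih' := ih (by omega)
    have hcast : ((a : ℝ) + 1 - b) = ((a : ℝ) - b) + 1 := by ring
    push_cast
    nlinarith [ih', hmono, hstep]

include hdd in
omit hc in
lemma vv_chain_upper {a b : ℕ} (h1 : 1 ≤ b) (hba : b ≤ a) (h2 : a ≤ Fintype.card α) :
    vv u a - vv u b ≤ gg u a * ((a : ℝ) - b) := by
  induction a, hba using Nat.le_induction with
  | base => simp
  | succ a hba ih =>
    have hstep : gg u a = vv u (a + 1) - vv u a := gg_eq_step h2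
    have hmono : gg u a ≤ gg u (a + 1) := gg_step_mono hdd (by omega) h2
    have ih' := ih (by omega)
    have hab : (0:ℝ) ≤ (a : ℝ) - b := by
      have : (b:ℝ) ≤ a := by exact_mod_cast hba
      linarith
    push_cast
    nlinarith [ih', hmono, hstep, hab]

include hdd in
omit hc in
lemma vv_subgrad {a b : ℕ} (ha1 : 1 ≤ a) (ha2 : a ≤ Fintype.card α)
    (hb1 : 1 ≤ b) (hb2 : b ≤ Fintype.card α) :
    gg u b * ((a : ℝ) - b) ≤ vv u a - vv u b := by
  rcases le_total b a with h | h
  · exact vv_chain_lower hdd hb1 h ha2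
  · have := vv_chain_upper hdd ha1 h hb2
    have hab : ((a:ℝ) - b) = -((b:ℝ) - a) := by ring
    nlinarith [this]

end Chain

section Core
variable {u : α → ℝ} (hdd : DD u)

include hdd in
/-- Abel-summation core: if B is antitone with entries in [1,M], A has entries in [1,M],
and prefix sums of B are dominated by those of A, then the v-sum difference is bounded
below by the smallest slope times the total difference. -/
lemma core_lemma (m : ℕ) (hm : 1 ≤ m) (A B : ℕ → ℕ)
    (hBanti : ∀ i j, i ≤ j → j < m → B j ≤ B i)
    (hAM : ∀ i, i < m → 1 ≤ A i ∧ A i ≤ Fintype.card α)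
    (hBM : ∀ i, i < m → 1 ≤ B i ∧ B i ≤ Fintype.card α)
    (hdom : ∀ k, k ≤ m → ∑ i ∈ Finset.range k, B i ≤ ∑ i ∈ Finset.range k, A i) :
    ∑ i ∈ Finset.range m, vv u (B i) +
      gg u (B (m - 1)) * ((∑ i ∈ Finset.range m, A i : ℕ) - (∑ i ∈ Finset.range m, B i : ℕ))
      ≤ ∑ i ∈ Finset.range m, vv u (A i) := by
  set d : ℕ → ℝ := fun i => (A i : ℝ) - (B i : ℝ) with hd
  set c : ℕ → ℝ := fun i => gg u (B i) with hcdef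
  have hsub : ∀ i ∈ Finset.range m, c i * d i ≤ vv u (A i) - vv u (B i) := by
    intro i hi
    rw [Finset.mem_range] at hi
    exact vv_subgrad hdd (hAM i hi).1 (hAM i hi).2 (hBM i hi).1 (hBM i hi).2
  have hsum1 : ∑ i ∈ Finset.range m, c i * d i
      ≤ ∑ i ∈ Finset.range m, (vv u (A i) - vv u (B i)) :=
    Finset.sum_le_sum hsub
  -- Abel summation
  have habel : ∑ i ∈ Finset.range m, c i • d i =
      c (m - 1) • (∑ i ∈ Finset.range m, d i) -
      ∑ i ∈ Finset.range (m - 1), (c (i + 1) - c i) • (∑ j ∈ Finset.range (i + 1), d j) :=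
    Finset.sum_range_by_parts c d m
  have hG : ∀ k, k ≤ m → 0 ≤ ∑ j ∈ Finset.range k, d j := by
    intro k hk
    have := hdom k hk
    have hcast : (∑ j ∈ Finset.range k, d j) =
        ((∑ i ∈ Finset.range k, A i : ℕ) : ℝ) - ((∑ i ∈ Finset.range k, B i : ℕ) : ℝ) := by
      push_cast [hd]
      rw [Finset.sum_sub_distrib]
    rw [hcast]
    have : ((∑ i ∈ Finset.range k, B i : ℕ) : ℝ) ≤ ((∑ i ∈ Finset.range k, A i : ℕ) : ℝ) := by
      exact_mod_cast this
    linarith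
  have hneg : ∑ i ∈ Finset.range (m - 1), (c (i + 1) - c i) • (∑ j ∈ Finset.range (i + 1), d j)
      ≤ 0 := by
    apply Finset.sum_nonpos
    intro i hi
    rw [Finset.mem_range] at hi
    have hci : c (i + 1) - c i ≤ 0 := by
      have hB1 : B (i + 1) ≤ B i := hBanti i (i + 1) (by omega) (by omega)
      have := gg_mono (u := u) hdd (hBM (i+1) (by omega)).1 hB1 (hBM i (by omega)).2
      simp only [hcdef]
      linarith
    have hGi := hG (i + 1) (by omega)
    simp only [smul_eq_mul]
    exact mul_nonpos_of_nonpos_of_nonneg hci hGi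
  have hmain : c (m - 1) * (∑ i ∈ Finset.range m, d i) ≤ ∑ i ∈ Finset.range m, c i * d i := by
    simp only [smul_eq_mul] at habel hneg
    linarith
  have hDtot : (∑ i ∈ Finset.range m, d i) =
      ((∑ i ∈ Finset.range m, A i : ℕ) : ℝ) - ((∑ i ∈ Finset.range m, B i : ℕ) : ℝ) := by
    push_cast [hd]
    rw [Finset.sum_sub_distrib]
  rw [Finset.sum_sub_distrib] at hsum1
  rw [← hDtot]
  simp only [hcdef] at hmain ⊢
  linarith

end Core

section Bridge

/-- take-sum as a range sum, for an arbitrary function applied to entries. -/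
lemma take_map_sum_eq_range (l : List ℕ) (f : ℕ → ℝ) (k : ℕ) (hk : k ≤ l.length) :
    ((l.map f).take k).sum = ∑ i ∈ Finset.range k, f (l.getD i 0) := by
  induction k with
  | zero => simp
  | succ k ih =>
    have hk' : k ≤ l.length := by omega
    have hkl : k < l.length := by omega
    rw [Finset.sum_range_succ, ← ih hk']
    have hlen : k < (l.map f).length := by simpa using hkl
    rw [List.sum_take_succ (l.map f) k hlen]
    congr 1
    rw [List.getElem_map, List.getD_eq_getElem (hn := hkl)]

lemma take_sum_eq_range (l : List ℕ) (k : ℕ) (hk : k ≤ l.length) :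
    (l.take k).sum = ∑ i ∈ Finset.range k, l.getD i 0 := by
  induction k with
  | zero => simp
  | succ k ih =>
    have hk' : k ≤ l.length := by omega
    have hkl : k < l.length := by omega
    rw [Finset.sum_range_succ, ← ih hk', List.sum_take_succ l k hkl]
    congr 1
    rw [List.getD_eq_getElem (hn := hkl)]

lemma sorted_ge_anti (l : List ℕ) (hs : l.Pairwise (· ≥ ·)) :
    ∀ i j, i ≤ j → j < l.length → l.getD j 0 ≤ l.getD i 0 := by
  intro i j hij hj
  rcases eq_or_lt_of_le hij with rfl | hlt
  · exact le_rfl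
  · have := (List.pairwise_iff_getElem).mp hs i j (by omega) hj hlt
    rw [List.getD_eq_getElem (hn := hj), List.getD_eq_getElem (hn := show i < l.length by omega)]
    exact this

end Bridge


/-- if |X| ≥ |Y|, the total level of the k best items of X is at least that
of the k best items of Y for all k ∈ {1,…,|Y|}, and Lev(X) > Lev(Y), then every positive
additive DD utility consistent with the ranking satisfies u(X) > u(Y). -/
theorem stmt5 (X Y : Multiset α)
    (hcard : Multiset.card Y ≤ Multiset.card X)
    (hlev : ∀ k, 1 ≤ k → k ≤ Multiset.card Y → topLevSum Y k ≤ topLevSum X k)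
    (hstrict : levSum Y < levSum X)
    (u : α → ℝ) (hpos : ∀ x, 0 < u x) (hc : Consistent u) (hdd : DD u) :
    msum u Y < msum u X := by
  classical
  set M := Fintype.card α with hM
  set m := Multiset.card Y with hmdef
  set n := Multiset.card X with hndef
  -- express msum via sorted level lists
  have msum_eq : ∀ S : Multiset α,
      msum u S = ((Multiset.sort (S.map lev) (· ≥ ·)).map (vv u)).sum := by
    intro S
    have h1 : msum u S = ((S.map lev).map (vv u)).sum := by
      rw [msum, Multiset.map_map]
      congr 1
      apply Multiset.map_congr rfl
      intro x _
      exact (vv_lev u x).symm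
    rw [h1, ← Multiset.sort_eq (S.map lev) (· ≥ ·), Multiset.map_coe, Multiset.sum_coe,
      Multiset.sort_eq]
  set lY : List ℕ := Multiset.sort (Y.map lev) (· ≥ ·) with hlY
  set lX : List ℕ := Multiset.sort (X.map lev) (· ≥ ·) with hlX
  have hlYlen : lY.length = m := by rw [hlY, Multiset.length_sort, Multiset.card_map]
  have hlXlen : lX.length = n := by rw [hlX, Multiset.length_sort, Multiset.card_map]
  -- entries of the sorted lists are attained levels
  have hYmem : ∀ t ∈ lY, ∃ x : α, lev x = t := by
    intro t ht
    rw [hlY, Multiset.mem_sort, Multiset.mem_map] at ht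
    obtain ⟨x, _, hx⟩ := ht
    exact ⟨x, hx⟩
  have hXmem : ∀ t ∈ lX, ∃ x : α, lev x = t := by
    intro t ht
    rw [hlX, Multiset.mem_sort, Multiset.mem_map] at ht
    obtain ⟨x, _, hx⟩ := ht
    exact ⟨x, hx⟩
  by_cases hm0 : m = 0
  · -- Y is empty
    have hY0 : Y = 0 := Multiset.card_eq_zero.mp hm0
    have hX0 : X ≠ 0 := by
      intro h
      rw [h, hY0] at hstrict
      simp [levSum] at hstrict
    have hXn : n ≠ 0 := fun h => hX0 (Multiset.card_eq_zero.mp h)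
    have hYz : msum u Y = 0 := by rw [hY0]; simp [msum]
    rw [hYz, msum_eq X, ← hlX]
    apply List.sum_pos
    · intro r hr
      rw [List.mem_map] at hr
      obtain ⟨t, ht, rfl⟩ := hr
      obtain ⟨x, rfl⟩ := hXmem t ht
      rw [vv_lev]
      exact hpos x
    · intro hnil
      have hli := congrArg List.length hnil
      simp only [List.length_map, List.length_nil, hlXlen] at hli
      exact hXn hli
  · have hm1 : 1 ≤ m := by omega
    have hmn : m ≤ n := hcard
    set B : ℕ → ℕ := fun i => lY.getD i 0 with hB
    set A : ℕ → ℕ := fun i => lX.getD i 0 with hA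
    have hBanti : ∀ i j, i ≤ j → j < m → B j ≤ B i := by
      intro i j hij hj
      exact sorted_ge_anti lY (Multiset.pairwise_sort _ _) i j hij (by omega)
    have hBmem : ∀ i, i < m → ∃ x : α, lev x = B i := by
      intro i hi
      apply hYmem
      have : i < lY.length := by omega
      rw [hB]
      simp only
      rw [List.getD_eq_getElem (hn := this)]
      exact List.getElem_mem _
    have hAmem : ∀ i, i < n → ∃ x : α, lev x = A i := by
      intro i hi
      apply hXmem
      have : i < lX.length := by omega
      rw [hA]
      simp only
      rw [List.getD_eq_getElem (hn := this)]
      exact List.getElem_mem _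
    have hBM : ∀ i, i < m → 1 ≤ B i ∧ B i ≤ M := by
      intro i hi
      obtain ⟨x, hx⟩ := hBmem i hi
      exact ⟨hx ▸ one_le_lev x, hx ▸ lev_le_card x⟩
    have hAM : ∀ i, i < m → 1 ≤ A i ∧ A i ≤ M := by
      intro i hi
      obtain ⟨x, hx⟩ := hAmem i (by omega)
      exact ⟨hx ▸ one_le_lev x, hx ▸ lev_le_card x⟩
    -- prefix sums
    have hTY : ∀ k, k ≤ m → ∑ i ∈ Finset.range k, B i = topLevSum Y k := by
      intro k hk
      rw [topLevSum, ← take_sum_eq_range lY k (by omega)]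
    have hTX : ∀ k, k ≤ n → ∑ i ∈ Finset.range k, A i = topLevSum X k := by
      intro k hk
      rw [topLevSum, ← take_sum_eq_range lX k (by omega)]
    have hdom : ∀ k, k ≤ m → ∑ i ∈ Finset.range k, B i ≤ ∑ i ∈ Finset.range k, A i := by
      intro k hk
      rcases Nat.eq_zero_or_pos k with rfl | hk1
      · simp
      · rw [hTY k hk, hTX k (by omega)]
        exact hlev k hk1 hk
    have core := core_lemma hdd m hm1 A B hBanti hAM hBM hdom
    -- identify sums
    have h1Y : lY.sum = levSum Y := by
      rw [levSum, ← Multiset.sort_eq (α := ℕ) (Multiset.map lev Y) (· ≥ ·), Multiset.sum_coe, hlY]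
    have hSB : ∑ i ∈ Finset.range m, B i = levSum Y := by
      rw [hTY m le_rfl, topLevSum, ← hlY, ← hlYlen, List.take_length, h1Y]
    have hmsumY : msum u Y = ∑ i ∈ Finset.range m, vv u (B i) := by
      rw [msum_eq Y, ← hlY, ← take_map_sum_eq_range lY (vv u) m (by omega)]
      rw [show (lY.map (vv u)).take m = lY.map (vv u) from by
        rw [show m = (lY.map (vv u)).length from by simp [hlYlen]]; exact List.take_length]
    -- split X sum
    have hmsumX : msum u X = (∑ i ∈ Finset.range m, vv u (A i)) + ((lX.map (vv u)).drop m).sum := by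
      rw [msum_eq X, ← hlX, ← take_map_sum_eq_range lX (vv u) m (by omega)]
      rw [← List.sum_append, List.take_append_drop]
    have hdropnonneg : 0 ≤ ((lX.map (vv u)).drop m).sum := by
      apply List.sum_nonneg
      intro r hr
      have hr' : r ∈ lX.map (vv u) := List.mem_of_mem_drop hr
      rw [List.mem_map] at hr'
      obtain ⟨t, ht, rfl⟩ := hr'
      obtain ⟨x, rfl⟩ := hXmem t ht
      rw [vv_lev]
      exact (hpos x).le
    have hgpos : 0 < gg u (B (m - 1)) :=
      gg_pos hpos hc (hBM (m-1) (by omega)).1 (hBM (m-1) (by omega)).2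
    rcases eq_or_lt_of_le hmn with heq | hlt
    · -- equal cardinalities: strict inequality comes from total level sums
      have h1X : lX.sum = levSum X := by
        rw [levSum, ← Multiset.sort_eq (α := ℕ) (Multiset.map lev X) (· ≥ ·), Multiset.sum_coe, hlX]
      have hSA : ∑ i ∈ Finset.range m, A i = levSum X := by
        rw [hTX m (by omega), topLevSum, ← hlX, heq, ← hlXlen, List.take_length, h1X]
      have hD : (0:ℝ) < ((∑ i ∈ Finset.range m, A i : ℕ) : ℝ) -
          ((∑ i ∈ Finset.range m, B i : ℕ) : ℝ) := by
        rw [hSA, hSB]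
        have : (levSum Y : ℝ) < (levSum X : ℝ) := by exact_mod_cast hstrict
        linarith
      rw [hmsumY, hmsumX]
      nlinarith [core, hD, hgpos, hdropnonneg]
    · -- X has strictly more items: the extra items have positive utility
      have hD : (0:ℝ) ≤ ((∑ i ∈ Finset.range m, A i : ℕ) : ℝ) -
          ((∑ i ∈ Finset.range m, B i : ℕ) : ℝ) := by
        have := hdom m le_rfl
        have : ((∑ i ∈ Finset.range m, B i : ℕ) : ℝ) ≤
            ((∑ i ∈ Finset.range m, A i : ℕ) : ℝ) := by exact_mod_cast this
        linarith
      have hdroppos : 0 < ((lX.map (vv u)).drop m).sum := by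
        apply List.sum_pos
        · intro r hr
          have hr' : r ∈ lX.map (vv u) := List.mem_of_mem_drop hr
          rw [List.mem_map] at hr'
          obtain ⟨t, ht, rfl⟩ := hr'
          obtain ⟨x, rfl⟩ := hXmem t ht
          rw [vv_lev]
          exact hpos x
        · have : ((lX.map (vv u)).drop m).length = n - m := by simp [hlXlen]
          intro hnil
          rw [hnil] at this
          simp at this
          omega
      rw [hmsumY, hmsumX]
      nlinarith [core, hD, hgpos, hdroppos]
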